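/- The J-ternary algebra O(1;n) with triple product L is simple: if I is a Φ-subspace of O(1;n) such that L_{f,g}(h) ∈ I, L_{f,h}(g) ∈ I, and L_{h,f}(g) ∈ I for all f, g ∈ O and all h ∈ I (i.e., I is an ideal of the ternary algebra), then I = 0 or I = O(1;n). -/

import Mathlib

/-!
Contracting with the unit `e₀` turns the triple product into the derivation:
`L_{e₀,e₀} h = ∂h`, so an ideal is `∂`-stable. Applying `∂^m` to a nonzero element of top degree `m`
leaves a nonzero multiple of `e₀`, hence `e₀` lies in the ideal, and then `L_{e₁,g} e₀ = -g` puts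
every `g` in it.
-/

/-- The product of the divided power algebra `O(1;n)`, written in coordinates with
respect to the basis `e_0, …, e_{3^n - 1}`: it is the bilinear product determined by
`e_i · e_j = binom(i+j, i) e_{i+j}`, where `e_k = 0` for `k ≥ 3^n`. -/
def omul (Φ : Type*) [Field Φ] (n : ℕ) (f g : Fin (3 ^ n) → Φ) : Fin (3 ^ n) → Φ :=
  fun k => ∑ i : Fin (3 ^ n), ∑ j : Fin (3 ^ n),
    if (i : ℕ) + (j : ℕ) = (k : ℕ)
    then (((i : ℕ) + (j : ℕ)).choose (i : ℕ) : Φ) * f i * g j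
    else 0

/-- The basis element `e_i` of `O(1;n)`. -/
def eb (Φ : Type*) [Field Φ] (n : ℕ) (i : Fin (3 ^ n)) : Fin (3 ^ n) → Φ :=
  Pi.single i 1

/-- The linear map `∂` on `O(1;n)`, with `∂ e_0 = 0` and `∂ e_i = e_{i-1}`;
in coordinates, `(∂ f)_k = f_{k+1}` (interpreted as `0` when `k + 1 ≥ 3^n`). -/
def odel (Φ : Type*) [Field Φ] (n : ℕ) (f : Fin (3 ^ n) → Φ) : Fin (3 ^ n) → Φ :=
  fun k => if h : (k : ℕ) + 1 < 3 ^ n then f ⟨(k : ℕ) + 1, h⟩ else 0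

/-- The triple product `L_{f,g}h = f·g·∂(h) − h·g·∂(f)` on `O(1;n)`. -/
def Lt (Φ : Type*) [Field Φ] (n : ℕ) (f g h : Fin (3 ^ n) → Φ) : Fin (3 ^ n) → Φ :=
  omul Φ n (omul Φ n f g) (odel Φ n h) - omul Φ n (omul Φ n h g) (odel Φ n f)

theorem exists_ne_zero_forall_gt_eq_zero {M : Type*} [Zero M] {N : ℕ} {f : Fin N → M}
    (hf : f ≠ 0) : ∃ m, f m ≠ 0 ∧ ∀ i, m < i → f i = 0 := by
  obtain ⟨i, hi⟩ := Function.ne_iff.mp hf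
  classical
  obtain ⟨m, hm, hmax⟩ := Finset.exists_max_image {j | f j ≠ 0} id ⟨i, by simpa using hi⟩
  refine ⟨m, by simpa using hm, fun j hj => ?_⟩
  by_contra hfj
  exact (hmax j (by simpa using hfj)).not_gt hj

section DividedPowers

variable {Φ : Type*} [Field Φ] {n : ℕ}

theorem omul_zero (f : Fin (3 ^ n) → Φ) : omul Φ n f 0 = 0 := by
  funext k
  simp [omul]

theorem eb_zero_omul (f : Fin (3 ^ n) → Φ) : omul Φ n (eb Φ n 0) f = f := by
  funext k
  rw [omul, Finset.sum_eq_single 0 (fun i _ hi => by simp [eb, hi]) (by simp),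
    Finset.sum_eq_single k (fun j _ hj => if_neg (by simpa [Fin.ext_iff] using hj)) (by simp)]
  simp [eb]

theorem omul_eb_zero (f : Fin (3 ^ n) → Φ) : omul Φ n f (eb Φ n 0) = f := by
  funext k
  rw [omul, Finset.sum_comm, Finset.sum_eq_single 0 (fun j _ hj => by simp [eb, hj]) (by simp),
    Finset.sum_eq_single k (fun i _ hi => if_neg (by simpa [Fin.ext_iff] using hi)) (by simp)]
  simp [eb]

theorem odel_eb_zero : odel Φ n (eb Φ n 0) = 0 := by
  funext k
  unfold odel eb
  split_ifs with hk
  · exact Pi.single_eq_of_ne (fun h => by simpa using congrArg Fin.val h) 1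
  · rfl

theorem odel_eb_one (h1 : 1 < 3 ^ n) : odel Φ n (eb Φ n ⟨1, h1⟩) = eb Φ n 0 := by
  funext k
  rcases eq_or_ne k 0 with rfl | hk
  · simp [odel, eb, h1]
  · have hk' : (k : ℕ) ≠ 0 := Fin.val_ne_zero_iff.mpr hk
    unfold odel eb
    split_ifs with hlt
    · rw [Pi.single_eq_of_ne (fun h => hk' (by simpa using congrArg Fin.val h)),
        Pi.single_eq_of_ne hk]
    · simp [hk]

theorem odel_iterate_apply (m : ℕ) (f : Fin (3 ^ n) → Φ) (k : Fin (3 ^ n)) :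
    (odel Φ n)^[m] f k = if h : (k : ℕ) + m < 3 ^ n then f ⟨k + m, h⟩ else 0 := by
  induction m generalizing f with
  | zero => simp
  | succ m ih =>
    rw [Function.iterate_succ_apply, ih]
    by_cases hm : (k : ℕ) + (m + 1) < 3 ^ n
    · simp [odel, hm, show (k : ℕ) + m < 3 ^ n by omega, Nat.add_assoc]
    · simp [odel, hm, show ¬(k : ℕ) + m + 1 < 3 ^ n by omega]

theorem odel_iterate_eq_smul_eb_zero {f : Fin (3 ^ n) → Φ} {m : Fin (3 ^ n)}
    (hf : ∀ i, m < i → f i = 0) : (odel Φ n)^[m] f = f m • eb Φ n 0 := by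
  funext k
  rw [odel_iterate_apply]
  rcases eq_or_ne k 0 with rfl | hk
  · simp [eb]
  · have hk' : (k : ℕ) ≠ 0 := Fin.val_ne_zero_iff.mpr hk
    split_ifs with hlt
    · simp [eb, hk, hf ⟨k + m, hlt⟩ (Fin.lt_def.mpr (show (m : ℕ) < k + m by omega))]
    · simp [eb, hk]

theorem Lt_eb_zero_eb_zero (h : Fin (3 ^ n) → Φ) :
    Lt Φ n (eb Φ n 0) (eb Φ n 0) h = odel Φ n h := by
  rw [Lt, eb_zero_omul, eb_zero_omul, odel_eb_zero, omul_zero, sub_zero]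

theorem Lt_eb_one_eb_zero (h1 : 1 < 3 ^ n) (g : Fin (3 ^ n) → Φ) :
    Lt Φ n (eb Φ n ⟨1, h1⟩) g (eb Φ n 0) = -g := by
  rw [Lt, odel_eb_zero, omul_zero, eb_zero_omul, odel_eb_one, omul_eb_zero, zero_sub]

variable {I : Submodule Φ (Fin (3 ^ n) → Φ)}

theorem odel_iterate_mem (hI : ∀ f g, ∀ h ∈ I, Lt Φ n f g h ∈ I) {h : Fin (3 ^ n) → Φ}
    (hh : h ∈ I) (m : ℕ) : (odel Φ n)^[m] h ∈ I := by
  induction m with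
  | zero => exact hh
  | succ m ih =>
    rw [Function.iterate_succ_apply', ← Lt_eb_zero_eb_zero]
    exact hI _ _ _ ih

theorem eb_zero_mem_of_ne_bot (hI : ∀ f g, ∀ h ∈ I, Lt Φ n f g h ∈ I) (hI0 : I ≠ ⊥) :
    eb Φ n 0 ∈ I := by
  obtain ⟨h, hh, hh0⟩ := Submodule.exists_mem_ne_zero_of_ne_bot hI0
  obtain ⟨m, hm, hmax⟩ := exists_ne_zero_forall_gt_eq_zero hh0
  have hmem := I.smul_mem (h m)⁻¹ (odel_iterate_mem hI hh m)
  rwa [odel_iterate_eq_smul_eb_zero hmax, smul_smul, inv_mul_cancel₀ hm, one_smul] at hmem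

theorem eq_top_of_eb_zero_mem (h1 : 1 < 3 ^ n) (hI : ∀ f g, ∀ h ∈ I, Lt Φ n f g h ∈ I)
    (he : eb Φ n 0 ∈ I) : I = ⊤ := by
  refine Submodule.eq_top_iff'.mpr fun g => ?_
  simpa [Lt_eb_one_eb_zero h1] using I.neg_mem (hI (eb Φ n ⟨1, h1⟩) g _ he)

end DividedPowers

theorem Jternary_simple_general (Φ : Type*) [Field Φ] (n : ℕ) (hn : 1 ≤ n) :
    ∀ I : Submodule Φ (Fin (3 ^ n) → Φ),
      (∀ f g : Fin (3 ^ n) → Φ, ∀ h ∈ I,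
        Lt Φ n f g h ∈ I ∧ Lt Φ n f h g ∈ I ∧ Lt Φ n h f g ∈ I) →
      I = ⊥ ∨ I = ⊤ := by
  intro I hI
  have hL : ∀ f g, ∀ h ∈ I, Lt Φ n f g h ∈ I := fun f g h hh => (hI f g h hh).1
  have h1 : 1 < 3 ^ n := Nat.one_lt_pow (by omega) (by norm_num)
  refine or_iff_not_imp_left.mpr fun hI0 => ?_
  exact eq_top_of_eb_zero_mem h1 hL (eb_zero_mem_of_ne_bot hL hI0)

/-- The J-ternary algebra `O(1;n)` with triple product `L_{f,g}h = f·g·∂(h) − h·g·∂(f)`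
is simple: any subspace `I` that is an ideal of the ternary algebra (closed under the
triple product whenever at least one argument lies in `I`) is `0` or all of `O(1;n)`. -/
theorem Jternary_simple (Φ : Type*) [Field Φ] [CharP Φ 3] (n : ℕ) (hn : 1 ≤ n) :
    ∀ I : Submodule Φ (Fin (3 ^ n) → Φ),
      (∀ f g : Fin (3 ^ n) → Φ, ∀ h ∈ I,
        Lt Φ n f g h ∈ I ∧ Lt Φ n f h g ∈ I ∧ Lt Φ n h f g ∈ I) →
      I = ⊥ ∨ I = ⊤ :=
  Jternary_simple_general Φ n hn
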